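/- For k ≥ 2, (1/2628)(−219 − 33√73 + (9125 + 73√73)k + √α) ≥ 4k − 1, where α = 3325734 − 14454√73 + (−11766432 + 287328√73)k + (12267358 − 564874√73)k^2 (and α ≥ 0). -/
import Mathlib


/-- The quantity `α` from Corollary (Corstrongbnd). -/
noncomputable def alphaQ (k : ℝ) : ℝ :=
  3325734 - 14454 * Real.sqrt 73 + (-11766432 + 287328 * Real.sqrt 73) * k
    + (12267358 - 564874 * Real.sqrt 73) * k ^ 2

/-- For integers `k ≥ 2`, `α ≥ 0` and
`(1/2628)(−219 − 33√73 + (9125 + 73√73)k + √α) ≥ 4k − 1`. -/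
theorem stmt_11 (k : ℕ) (hk : 2 ≤ k) :
    0 ≤ alphaQ k ∧
    (4 * (k : ℝ) - 1) ≤ (1 / 2628) * (-219 - 33 * Real.sqrt 73
      + (9125 + 73 * Real.sqrt 73) * k + Real.sqrt (alphaQ k)) := by
  set s := Real.sqrt 73 with hs
  have hs2 : s ^ 2 = 73 := Real.sq_sqrt (by norm_num)
  have hs0 : (0:ℝ) ≤ s := Real.sqrt_nonneg _
  have hsl : (8.5:ℝ) ≤ s := by nlinarith
  have hsu : s ≤ (8.6:ℝ) := by nlinarith
  have hk2 : (2:ℝ) ≤ (k:ℝ) := by exact_mod_cast hk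
  have halpha : 0 ≤ alphaQ k := by
    unfold alphaQ
    nlinarith [sq_nonneg ((k:ℝ) - 2), sq_nonneg (k:ℝ), hk2, hs2, hsl, hsu]
  refine ⟨halpha, ?_⟩
  set R : ℝ := (1387 - 73 * s) * k - 2409 + 33 * s with hR
  have key : R ≤ Real.sqrt (alphaQ k) := by
    rcases le_or_gt R 0 with h | h
    · exact h.trans (Real.sqrt_nonneg _)
    · have hsq : R ^ 2 ≤ alphaQ k := by
        unfold alphaQ
        nlinarith [sq_nonneg ((k:ℝ) - 2), sq_nonneg (k:ℝ), hk2, hs2, hsl, hsu,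
          mul_le_mul_of_nonneg_left hk2 (by nlinarith : (0:ℝ) ≤ 9954572 - 362372 * s)]
      calc R = Real.sqrt (R ^ 2) := (Real.sqrt_sq h.le).symm
        _ ≤ Real.sqrt (alphaQ k) := Real.sqrt_le_sqrt hsq
  rw [hR] at key
  nlinarith [key]
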